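/- Tight relaxation with mixed extensions: let R̂ = R̂₁ - R̂₂ and Ŝ = Ŝ₁ - Ŝ₂ be non-negative set functions decomposed into differences of submodular functions (all vanishing on ∅). Let R₁, S₂ be the Lovasz extensions of R̂₁, Ŝ₂, and let R'₂, S'₁ be positively one-homogeneous convex functions with R'₂(1_A)=R̂₂(A), S'₁(1_A)=Ŝ₁(A) for all A, such that S'₁ - S₂ is non-negative. Then inf_{C ⊆ V} R̂(C)/Ŝ(C) = inf_{f ∈ ℝ₊^n} (R₁(f)-R'₂(f))/(S'₁(f)-S₂(f)), and for all f ∈ ℝ₊^n, (R₁(f)-R'₂(f))/(S'₁(f)-S₂(f)) ≥ min_i R̂(C_i)/Ŝ(C_i). -/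

import Mathlib

/-!
For `f ≥ 0` with sorted values `s₀ ≤ ⋯ ≤ sₙ₋₁` and threshold sets `Cₖ = {j | sₖ ≤ f j}`, one has
`f = ∑ₖ wₖ 1_{Cₖ}` with the nonnegative weights `wₖ = sₖ - sₖ₋₁` (`s₋₁ = 0`), and the Lovász
extension of any set function `R` is `∑ₖ wₖ R(Cₖ)`. A convex positively homogeneous function is
subadditive, so an extension `R'` of `R` lies below the Lovász extension of `R` on `ℝ₊ⁿ`. Hence
the numerator of the relaxed ratio dominates `∑ₖ wₖ R̂(Cₖ)` and its denominator is dominated by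
`∑ₖ wₖ Ŝ(Cₖ)`, and a ratio of weighted sums is at least one of the ratios `R̂(Cₖ)/Ŝ(Cₖ)`.
Conversely, on indicator vectors both ratios agree, so the two infima coincide.
-/

open Finset

noncomputable def sortedVal {n : ℕ} (f : Fin n → ℝ) : Fin n → ℝ := f ∘ Tuple.sort f

noncomputable def thresholdSet {n : ℕ} (f : Fin n → ℝ) (i : Fin n) : Finset (Fin n) :=
  Finset.univ.filter (fun j => sortedVal f i ≤ f j)

noncomputable def lovasz {n : ℕ} (R : Finset (Fin n) → ℝ) (f : Fin n → ℝ) : ℝ :=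
  (∑ i : Fin n, if h : (i : ℕ) + 1 < n then
      R (thresholdSet f ⟨(i : ℕ) + 1, h⟩) * (sortedVal f ⟨(i : ℕ) + 1, h⟩ - sortedVal f i)
    else 0)
  + R Finset.univ * (if h : 0 < n then sortedVal f ⟨0, h⟩ else 0)

def Submodular {α : Type*} [DecidableEq α] (R : Finset α → ℝ) : Prop :=
  ∀ A B : Finset α, R (A ∪ B) + R (A ∩ B) ≤ R A + R B

namespace Fin

variable {m : ℕ} {G : Type*}

theorem sum_univ_succ_sub_castSucc [AddCommGroup G] (s : Fin (m + 1) → G) :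
    ∑ i : Fin m, (s i.succ - s i.castSucc) = s (last m) - s 0 := by
  induction m with
  | zero => simp
  | succ m ih =>
    rw [sum_univ_castSucc]
    simp only [succ_castSucc]
    rw [ih fun i => s i.castSucc]
    simp

/-- `increments s k = s k - s (k - 1)`, with `s (-1) = 0`. -/
def increments [Sub G] (s : Fin (m + 1) → G) : Fin (m + 1) → G :=
  cons (s 0) fun i => s i.succ - s i.castSucc

@[simp] theorem increments_zero [Sub G] (s : Fin (m + 1) → G) :
    increments s 0 = s 0 := cons_zero _ _

@[simp] theorem increments_succ [Sub G] (s : Fin (m + 1) → G) (i : Fin m) :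
    increments s i.succ = s i.succ - s i.castSucc := cons_succ _ _ _

theorem sum_increments [AddCommGroup G] (s : Fin (m + 1) → G) :
    ∑ k, increments s k = s (last m) := by
  rw [sum_univ_succ, increments_zero]
  simp only [increments_succ]
  rw [sum_univ_succ_sub_castSucc, add_sub_cancel]

theorem increments_nonneg {s : Fin (m + 1) → ℝ} (hs : Monotone s) (h0 : 0 ≤ s 0)
    (k : Fin (m + 1)) : 0 ≤ increments s k := by
  cases k using Fin.cases with
  | zero => simpa using h0
  | succ i => simpa using hs i.castSucc_le_succ

theorem sum_increments_mul_indicator {s : Fin (m + 1) → ℝ} (hs : Monotone s) (p : Fin (m + 1)) :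
    ∑ k, increments s k * (if s k ≤ s p then 1 else 0) = s p := by
  have hterm : ∀ k, increments s k * (if s k ≤ s p then 1 else 0)
      = increments (fun k => min (s k) (s p)) k := by
    intro k
    cases k using Fin.cases with
    | zero => simp [hs (Fin.zero_le p)]
    | succ i =>
      by_cases h : s i.succ ≤ s p
      · simp [h, (hs i.castSucc_le_succ).trans h]
      · have hp : s p ≤ s i.castSucc :=
          hs (le_castSucc_iff.2 (hs.reflect_lt (lt_of_not_ge h)))
        simp [h, (not_le.1 h).le, hp]
  rw [Finset.sum_congr rfl fun k _ => hterm k, sum_increments]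
  exact min_eq_right (hs (le_last p))

end Fin

open Fin

section Sorted

variable {m : ℕ}

theorem sortedVal_monotone {n : ℕ} (f : Fin n → ℝ) : Monotone (sortedVal f) :=
  Tuple.monotone_sort f

theorem sortedVal_sort_symm {n : ℕ} (f : Fin n → ℝ) (j : Fin n) :
    sortedVal f ((Tuple.sort f).symm j) = f j := by
  simp [sortedVal]

theorem mem_thresholdSet {n : ℕ} {f : Fin n → ℝ} {i j : Fin n} :
    j ∈ thresholdSet f i ↔ sortedVal f i ≤ f j := by
  simp [thresholdSet]

theorem thresholdSet_nonempty {n : ℕ} (f : Fin n → ℝ) (i : Fin n) :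
    (thresholdSet f i).Nonempty :=
  ⟨Tuple.sort f i, mem_thresholdSet.2 le_rfl⟩

theorem thresholdSet_zero (f : Fin (m + 1) → ℝ) : thresholdSet f 0 = univ := by
  ext j
  simpa [mem_thresholdSet, sortedVal_sort_symm] using
    sortedVal_monotone f (Fin.zero_le ((Tuple.sort f).symm j))

theorem lovasz_eq_sum_increments (R : Finset (Fin (m + 1)) → ℝ) (f : Fin (m + 1) → ℝ) :
    lovasz R f = ∑ k, increments (sortedVal f) k * R (thresholdSet f k) := by
  rw [lovasz, sum_univ_castSucc, sum_univ_succ]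
  simp only [val_castSucc, val_last, Nat.lt_irrefl, dite_false, add_zero, add_lt_add_iff_right,
    is_lt, dite_true, Nat.zero_lt_succ, increments_zero, increments_succ, thresholdSet_zero]
  rw [add_comm, mul_comm]
  congr 1
  exact sum_congr rfl fun i _ => mul_comm _ _

theorem sum_increments_smul_indicator (f : Fin (m + 1) → ℝ) :
    ∑ k, increments (sortedVal f) k • (fun j => if j ∈ thresholdSet f k then 1 else 0) = f := by
  funext j
  simp only [Finset.sum_apply, Pi.smul_apply, smul_eq_mul, mem_thresholdSet,
    ← sortedVal_sort_symm f j]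
  exact sum_increments_mul_indicator (sortedVal_monotone f) _

end Sorted

theorem ConvexOn.map_sum_le_of_homogeneous {E ι : Type*} [AddCommGroup E] [Module ℝ E]
    {φ : E → ℝ} (hconv : ConvexOn ℝ Set.univ φ) (hhom : ∀ α : ℝ, 0 ≤ α → ∀ x, φ (α • x) = α * φ x)
    (s : Finset ι) (g : ι → E) : φ (∑ i ∈ s, g i) ≤ ∑ i ∈ s, φ (g i) := by
  refine le_sum_of_subadditive φ (by simpa using (hhom 0 le_rfl 0).le) (fun x y => ?_) s g
  have hmid := hconv.2 (Set.mem_univ x) (Set.mem_univ y) (by norm_num : (0 : ℝ) ≤ 1 / 2)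
    (by norm_num : (0 : ℝ) ≤ 1 / 2) (by norm_num)
  rw [← smul_add, hhom _ (by norm_num)] at hmid
  simp only [smul_eq_mul] at hmid
  linarith

section Extension

variable {m : ℕ}

theorem le_lovasz_of_convexOn {φ : (Fin (m + 1) → ℝ) → ℝ} {R : Finset (Fin (m + 1)) → ℝ}
    (hconv : ConvexOn ℝ Set.univ φ) (hhom : ∀ α : ℝ, 0 ≤ α → ∀ x, φ (α • x) = α * φ x)
    (hext : ∀ A, φ (fun j => if j ∈ A then 1 else 0) = R A)
    {f : Fin (m + 1) → ℝ} (hf : ∀ i, 0 ≤ f i) : φ f ≤ lovasz R f := by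
  have hinc : ∀ k, 0 ≤ increments (sortedVal f) k :=
    increments_nonneg (sortedVal_monotone f) (hf _)
  calc φ f = φ (∑ k, increments (sortedVal f) k •
        (fun j => if j ∈ thresholdSet f k then 1 else 0)) := by
        rw [sum_increments_smul_indicator]
    _ ≤ ∑ k, φ (increments (sortedVal f) k • (fun j => if j ∈ thresholdSet f k then 1 else 0)) :=
        hconv.map_sum_le_of_homogeneous hhom _ _
    _ = lovasz R f := by
        simp only [hhom _ (hinc _), hext, lovasz_eq_sum_increments]

theorem lovasz_indicator {n : ℕ} (R : Finset (Fin n) → ℝ) {C : Finset (Fin n)}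
    (hC : C.Nonempty) : lovasz R (fun j => if j ∈ C then 1 else 0) = R C := by
  obtain ⟨j₀, hj₀⟩ := hC
  obtain ⟨m, rfl⟩ := Nat.exists_eq_add_one.2 j₀.pos
  set f : Fin (m + 1) → ℝ := fun j => if j ∈ C then 1 else 0 with hf
  have hval : ∀ k, sortedVal f k = 0 ∨ sortedVal f k = 1 := fun k => by
    simp only [sortedVal, Function.comp_apply, hf]
    split_ifs <;> simp
  have hT : ∀ k, sortedVal f k = 1 → thresholdSet f k = C := fun k hk => by
    ext j
    rw [mem_thresholdSet, hk, hf]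
    by_cases hj : j ∈ C <;> simp [hj]
  have hinc : ∀ k, increments (sortedVal f) k ≠ 0 → sortedVal f k = 1 := fun k hk => by
    cases k using Fin.cases with
    | zero => exact (hval 0).resolve_left (by simpa using hk)
    | succ i =>
      refine (hval i.succ).resolve_left fun h0 => hk ?_
      have := sortedVal_monotone f i.castSucc_le_succ
      rcases hval i.castSucc with h | h
      · simp [h, h0]
      · linarith
  have hlast : sortedVal f (last m) = 1 := by
    have := sortedVal_monotone f (le_last ((Tuple.sort f).symm j₀))
    rw [sortedVal_sort_symm, hf] at this
    simp only [hj₀, if_true] at this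
    rcases hval (last m) with h | h <;> linarith
  calc lovasz R f = ∑ k, increments (sortedVal f) k * R C := by
        rw [lovasz_eq_sum_increments]
        refine sum_congr rfl fun k _ => ?_
        by_cases h : increments (sortedVal f) k = 0
        · simp [h]
        · rw [hT k (hinc k h)]
    _ = R C := by rw [← sum_mul, sum_increments, hlast, one_mul]

end Extension

theorem exists_div_le_div_of_sum_mul_le {ι : Type*} [Fintype ι] {w a b : ι → ℝ} {N D : ℝ}
    (hw : ∀ i, 0 ≤ w i) (ha : ∀ i, 0 ≤ a i) (hN : ∑ i, w i * a i ≤ N)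
    (hD : 0 < D) (hDb : D ≤ ∑ i, w i * b i) : ∃ i, 0 < b i ∧ a i / b i ≤ N / D := by
  by_contra! hlt
  set c := N / D
  have hc0 : 0 ≤ c := div_nonneg ((sum_nonneg fun i _ => mul_nonneg (hw i) (ha i)).trans hN) hD.le
  have hle : ∀ i, c * (w i * b i) ≤ w i * a i := fun i => by
    by_cases hb : 0 < b i
    · have := ((lt_div_iff₀ hb).1 (hlt i hb)).le
      nlinarith [hw i]
    · nlinarith [hw i, ha i, mul_nonneg hc0 (hw i)]
  obtain ⟨i, -, hi⟩ : ∃ i ∈ univ, (0 : ℝ) < w i * b i :=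
    exists_lt_of_sum_lt (by simpa using hD.trans_le hDb)
  have hbi : 0 < b i := pos_of_mul_pos_right hi (hw i)
  have hlti : c * (w i * b i) < w i * a i := by
    have := (lt_div_iff₀ hbi).1 (hlt i hbi)
    nlinarith [pos_of_mul_pos_left hi hbi.le]
  refine lt_irrefl N ?_
  calc N = c * D := (div_mul_cancel₀ N hD.ne').symm
    _ ≤ c * ∑ i, w i * b i := mul_le_mul_of_nonneg_left hDb hc0
    _ < ∑ i, w i * a i := by
        rw [mul_sum]
        exact sum_lt_sum (fun i _ => hle i) ⟨i, mem_univ i, hlti⟩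
    _ ≤ N := hN

theorem exists_thresholdSet_div_le {n : ℕ} {R₁ R₂ S₁ S₂ : Finset (Fin n) → ℝ}
    (hRpos : ∀ A, 0 ≤ R₁ A - R₂ A) {R₂' S₁' : (Fin n → ℝ) → ℝ}
    (hR₂'conv : ConvexOn ℝ Set.univ R₂') (hS₁'conv : ConvexOn ℝ Set.univ S₁')
    (hR₂'hom : ∀ α : ℝ, 0 ≤ α → ∀ f, R₂' (α • f) = α * R₂' f)
    (hS₁'hom : ∀ α : ℝ, 0 ≤ α → ∀ f, S₁' (α • f) = α * S₁' f)
    (hR₂'ext : ∀ A, R₂' (fun j => if j ∈ A then 1 else 0) = R₂ A)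
    (hS₁'ext : ∀ A, S₁' (fun j => if j ∈ A then 1 else 0) = S₁ A)
    {f : Fin n → ℝ} (hf : ∀ i, 0 ≤ f i) (hD : 0 < S₁' f - lovasz S₂ f) :
    ∃ i, 0 < S₁ (thresholdSet f i) - S₂ (thresholdSet f i) ∧
      (R₁ (thresholdSet f i) - R₂ (thresholdSet f i))
          / (S₁ (thresholdSet f i) - S₂ (thresholdSet f i))
        ≤ (lovasz R₁ f - R₂' f) / (S₁' f - lovasz S₂ f) := by
  cases n with
  | zero =>
    rw [Subsingleton.elim f ((0 : ℝ) • f), hS₁'hom 0 le_rfl] at hD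
    simp [lovasz] at hD
  | succ m =>
    have lovasz_sub (P Q : Finset (Fin (m + 1)) → ℝ) : lovasz P f - lovasz Q f
        = ∑ k, increments (sortedVal f) k * (P (thresholdSet f k) - Q (thresholdSet f k)) := by
      simp only [lovasz_eq_sum_increments, mul_sub, sum_sub_distrib]
    refine exists_div_le_div_of_sum_mul_le (increments_nonneg (sortedVal_monotone f) (hf _))
      (fun k => hRpos _) ?_ hD ?_
    · rw [← lovasz_sub]
      linarith [le_lovasz_of_convexOn hR₂'conv hR₂'hom hR₂'ext hf]
    · rw [← lovasz_sub]
      linarith [le_lovasz_of_convexOn hS₁'conv hS₁'hom hS₁'ext hf]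

theorem tight_relaxation_mixed_general {n : ℕ}
    (R₁ R₂ S₁ S₂ : Finset (Fin n) → ℝ)
    (hRpos : ∀ A : Finset (Fin n), 0 ≤ R₁ A - R₂ A)
    (R₂' S₁' : (Fin n → ℝ) → ℝ)
    (hR₂'conv : ConvexOn ℝ Set.univ R₂') (hS₁'conv : ConvexOn ℝ Set.univ S₁')
    (hR₂'hom : ∀ α : ℝ, 0 ≤ α → ∀ f : Fin n → ℝ, R₂' (α • f) = α * R₂' f)
    (hS₁'hom : ∀ α : ℝ, 0 ≤ α → ∀ f : Fin n → ℝ, S₁' (α • f) = α * S₁' f)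
    (hR₂'ext : ∀ A : Finset (Fin n), R₂' (fun j => if j ∈ A then 1 else 0) = R₂ A)
    (hS₁'ext : ∀ A : Finset (Fin n), S₁' (fun j => if j ∈ A then 1 else 0) = S₁ A) :
    (sInf {q : ℝ | ∃ C : Finset (Fin n), C.Nonempty ∧ 0 < S₁ C - S₂ C ∧
          q = (R₁ C - R₂ C) / (S₁ C - S₂ C)}
      = sInf {q : ℝ | ∃ f : Fin n → ℝ, (∀ i, 0 ≤ f i) ∧ 0 < S₁' f - lovasz S₂ f ∧
          q = (lovasz R₁ f - R₂' f) / (S₁' f - lovasz S₂ f)}) ∧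
    (∀ f : Fin n → ℝ, (∀ i, 0 ≤ f i) → 0 < S₁' f - lovasz S₂ f →
      ∃ i : Fin n, 0 < S₁ (thresholdSet f i) - S₂ (thresholdSet f i) ∧
        (R₁ (thresholdSet f i) - R₂ (thresholdSet f i))
            / (S₁ (thresholdSet f i) - S₂ (thresholdSet f i))
          ≤ (lovasz R₁ f - R₂' f) / (S₁' f - lovasz S₂ f)) := by
  have thresholding := fun (f : Fin n → ℝ) (hf : ∀ i, 0 ≤ f i) =>
    exists_thresholdSet_div_le (S₂ := S₂) hRpos hR₂'conv hS₁'conv hR₂'hom hS₁'hom hR₂'ext hS₁'ext hf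
  refine ⟨csInf_eq_csInf_of_forall_exists_le ?_ ?_, thresholding⟩
  · rintro _ ⟨C, hC, hpos, rfl⟩
    refine ⟨_, ⟨fun j => if j ∈ C then 1 else 0, fun j => by positivity, ?_, rfl⟩, le_of_eq ?_⟩
    · rwa [hS₁'ext, lovasz_indicator _ hC]
    · rw [hS₁'ext, hR₂'ext, lovasz_indicator _ hC, lovasz_indicator _ hC]
  · rintro _ ⟨f, hf, hD, rfl⟩
    obtain ⟨i, hpos, hle⟩ := thresholding f hf hD
    exact ⟨_, ⟨thresholdSet f i, thresholdSet_nonempty f i, hpos, rfl⟩, hle⟩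

/-- tight relaxation with mixed extensions R₁ - R₂' and S₁' - S₂,
plus the optimal-thresholding inequality. -/
theorem tight_relaxation_mixed {n : ℕ}
    (R₁ R₂ S₁ S₂ : Finset (Fin n) → ℝ)
    (hR₁ : Submodular R₁) (hR₂ : Submodular R₂)
    (hS₁ : Submodular S₁) (hS₂ : Submodular S₂)
    (hR₁0 : R₁ ∅ = 0) (hR₂0 : R₂ ∅ = 0) (hS₁0 : S₁ ∅ = 0) (hS₂0 : S₂ ∅ = 0)
    (hRpos : ∀ A : Finset (Fin n), 0 ≤ R₁ A - R₂ A)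
    (hSpos : ∀ A : Finset (Fin n), 0 ≤ S₁ A - S₂ A)
    (R₂' S₁' : (Fin n → ℝ) → ℝ)
    (hR₂'conv : ConvexOn ℝ Set.univ R₂') (hS₁'conv : ConvexOn ℝ Set.univ S₁')
    (hR₂'hom : ∀ α : ℝ, 0 ≤ α → ∀ f : Fin n → ℝ, R₂' (α • f) = α * R₂' f)
    (hS₁'hom : ∀ α : ℝ, 0 ≤ α → ∀ f : Fin n → ℝ, S₁' (α • f) = α * S₁' f)
    (hR₂'ext : ∀ A : Finset (Fin n), R₂' (fun j => if j ∈ A then 1 else 0) = R₂ A)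
    (hS₁'ext : ∀ A : Finset (Fin n), S₁' (fun j => if j ∈ A then 1 else 0) = S₁ A)
    (hden : ∀ f : Fin n → ℝ, 0 ≤ S₁' f - lovasz S₂ f) :
    (sInf {q : ℝ | ∃ C : Finset (Fin n), C.Nonempty ∧ 0 < S₁ C - S₂ C ∧
          q = (R₁ C - R₂ C) / (S₁ C - S₂ C)}
      = sInf {q : ℝ | ∃ f : Fin n → ℝ, (∀ i, 0 ≤ f i) ∧ 0 < S₁' f - lovasz S₂ f ∧
          q = (lovasz R₁ f - R₂' f) / (S₁' f - lovasz S₂ f)}) ∧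
    (∀ f : Fin n → ℝ, (∀ i, 0 ≤ f i) → 0 < S₁' f - lovasz S₂ f →
      ∃ i : Fin n, 0 < S₁ (thresholdSet f i) - S₂ (thresholdSet f i) ∧
        (R₁ (thresholdSet f i) - R₂ (thresholdSet f i))
            / (S₁ (thresholdSet f i) - S₂ (thresholdSet f i))
          ≤ (lovasz R₁ f - R₂' f) / (S₁' f - lovasz S₂ f)) :=
  tight_relaxation_mixed_general R₁ R₂ S₁ S₂ hRpos R₂' S₁' hR₂'conv hS₁'conv hR₂'hom hS₁'hom hR₂'ext
    hS₁'ext
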